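/- The βμμ'ρεθ-reduction of the typed λμ-calculus is not strongly normalizing: there exists a typable λμ-term M (namely M = (μβ.U)U with U = μα.[α][α]x, typable under the context x : ⊥) admitting an infinite reduction sequence M →_μ' M₁ →_μ M₂ →_ρ M₃ →_θ M, i.e., a reduction cycle back to M. -/
import Mathlib


namespace LMu

/-- λμ-terms: variables, λ-abstraction, application, bracket [α]M, μ-abstraction. -/
inductive Trm : Type
  | var : ℕ → Trm
  | lam : ℕ → Trm → Trm
  | app : Trm → Trm → Trm
  | brk : ℕ → Trm → Trm
  | mu  : ℕ → Trm → Trm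
deriving DecidableEq

/-- α-translation: replace every subterm [α]N by N. -/
def trans (a : ℕ) : Trm → Trm
  | .var x => .var x
  | .lam x M => .lam x (trans a M)
  | .app M N => .app (trans a M) (trans a N)
  | .brk b M => if b = a then trans a M else .brk b (trans a M)
  | .mu b M => .mu b (trans a M)

/-- Renaming of free occurrences of the μ-variable a by b. -/
def renMu (a b : ℕ) : Trm → Trm
  | .var x => .var x
  | .lam x M => .lam x (renMu a b M)
  | .app M N => .app (renMu a b M) (renMu a b N)
  | .brk c M => .brk (if c = a then b else c) (renMu a b M)
  | .mu c M => if c = a then .mu c M else .mu c (renMu a b M)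

/-- λ-substitution M[x:=N]. -/
def subL (x : ℕ) (N : Trm) : Trm → Trm
  | .var y => if y = x then N else .var y
  | .lam y M => if y = x then .lam y M else .lam y (subL x N M)
  | .app M₁ M₂ => .app (subL x N M₁) (subL x N M₂)
  | .brk a M => .brk a (subL x N M)
  | .mu a M => .mu a (subL x N M)

/-- Right μ-substitution M[α:=_r N]: replace each [α]P by [α](P)N. -/
def subR (a : ℕ) (N : Trm) : Trm → Trm
  | .var x => .var x
  | .lam x M => .lam x (subR a N M)
  | .app M₁ M₂ => .app (subR a N M₁) (subR a N M₂)
  | .brk b M => if b = a then .brk b (.app (subR a N M) N) else .brk b (subR a N M)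
  | .mu b M => if b = a then .mu b M else .mu b (subR a N M)

/-- Left μ-substitution M[α:=_l N]: replace each [α]P by [α](N)P. -/
def subLmu (a : ℕ) (N : Trm) : Trm → Trm
  | .var x => .var x
  | .lam x M => .lam x (subLmu a N M)
  | .app M₁ M₂ => .app (subLmu a N M₁) (subLmu a N M₂)
  | .brk b M => if b = a then .brk b (.app N (subLmu a N M)) else .brk b (subLmu a N M)
  | .mu b M => if b = a then .mu b M else .mu b (subLmu a N M)

/-- Free μ-variables. -/
def fvMu : Trm → Finset ℕ
  | .var _ => ∅
  | .lam _ M => fvMu M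
  | .app M N => fvMu M ∪ fvMu N
  | .brk a M => insert a (fvMu M)
  | .mu a M => fvMu M \ {a}

/-- Complexity of a term. -/
def cxty : Trm → ℕ
  | .var _ => 1
  | .lam _ M => cxty M + 1
  | .app M N => cxty M + cxty N + 1
  | .brk _ M => cxty M + 1
  | .mu _ M => cxty M + 1

inductive Rule | beta | mu | mu' | rho | theta | eps
deriving DecidableEq

/-- Head (root) reduction for each rule. -/
inductive Head : Rule → Trm → Trm → Prop
  | beta (x M N) : Head .beta (.app (.lam x M) N) (subL x N M)
  | mu (a M N) : Head .mu (.app (.mu a M) N) (.mu a (subR a N M))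
  | mu' (a M N) : Head .mu' (.app N (.mu a M)) (.mu a (subLmu a N M))
  | rho (a b M) : Head .rho (.brk b (.mu a M)) (renMu a b M)
  | theta (a M) : a ∉ fvMu M → Head .theta (.mu a (.brk a M)) M
  | eps (a b M) : Head .eps (.mu a (.mu b M)) (.mu a (trans b M))

/-- One-step reduction by any rule in S, anywhere in the term. -/
inductive Step (S : Set Rule) : Trm → Trm → Prop
  | head {r M N} : r ∈ S → Head r M N → Step S M N
  | lam {M N} (x) : Step S M N → Step S (.lam x M) (.lam x N)
  | appl {M M'} (N) : Step S M M' → Step S (.app M N) (.app M' N)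
  | appr {N N'} (M) : Step S N N' → Step S (.app M N) (.app M N')
  | brk {M N} (a) : Step S M N → Step S (.brk a M) (.brk a N)
  | mu {M N} (a) : Step S M N → Step S (.mu a M) (.mu a N)

def RS : Set Rule := {.beta, .mu, .rho, .theta, .eps}
def RS' : Set Rule := {.beta, .mu, .mu', .rho, .eps}
def RAll : Set Rule := {.beta, .mu, .mu', .rho, .theta, .eps}

/-- Normal form for the rule set S. -/
def NF (S : Set Rule) (M : Trm) : Prop := ∀ N, ¬ Step S M N

/-- Strong normalization: every reduction sequence terminates. -/
def SN (S : Set Rule) (M : Trm) : Prop := Acc (fun a b => Step S b a) M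

def Steps (S : Set Rule) : Trm → Trm → Prop := Relation.ReflTransGen (Step S)

/-- Weak normalization: reduces to a normal form. -/
def WN (S : Set Rule) (M : Trm) : Prop := ∃ N, Steps S M N ∧ NF S N

/-- There is a reduction sequence of length n starting from M. -/
def RedSeq (S : Set Rule) : ℕ → Trm → Prop
  | 0, _ => True
  | n + 1, M => ∃ N, Step S M N ∧ RedSeq S n N

/-- Simple types. -/
inductive Ty | atom : ℕ → Ty | bot : Ty | arr : Ty → Ty → Ty

abbrev Ctx := ℕ → Option Ty

/-- Typing judgment Γ ⊢ M : A ; Θ of the simply typed λμ-calculus. -/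
inductive Typing : Ctx → Trm → Ty → Ctx → Prop
  | ax {Γ Θ x A} : Γ x = some A → Typing Γ (.var x) A Θ
  | lam {Γ Θ x M A B} : Typing (Function.update Γ x (some A)) M B Θ →
      Typing Γ (.lam x M) (.arr A B) Θ
  | app {Γ Θ M N A B} : Typing Γ M (.arr A B) Θ → Typing Γ N A Θ →
      Typing Γ (.app M N) B Θ
  | brk {Γ Θ a M A} : Typing Γ M A Θ → Θ a = some A → Typing Γ (.brk a M) .bot Θ
  | mu {Γ Θ a M A} : Typing Γ M .bot (Function.update Θ a (some A)) →
      Typing Γ (.mu a M) A Θ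

def Typable (M : Trm) : Prop := ∃ Γ A Θ, Typing Γ M A Θ

/-- Subterm relation. -/
inductive Sub : Trm → Trm → Prop
  | refl (M) : Sub M M
  | lam {P M} (x) : Sub P M → Sub P (.lam x M)
  | appl {P M} (N) : Sub P M → Sub P (.app M N)
  | appr {P N} (M) : Sub P N → Sub P (.app M N)
  | brk {P M} (a) : Sub P M → Sub P (.brk a M)
  | mu {P M} (a) : Sub P M → Sub P (.mu a M)

/-- M is α-clean: no subterm [α]U with U a λ-abstraction. -/
def Clean (a : ℕ) (M : Trm) : Prop :=
  ∀ U, Sub (.brk a U) M → ∀ x P, U ≠ .lam x P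

end LMu

namespace LMuAux
open LMu

def Ubar : Trm := .mu 0 (.brk 0 (.brk 0 (.var 0)))
def Nbar : Trm := .mu 1 Ubar
def Mbar : Trm := .app Nbar Ubar
def M1 : Trm := .mu 0 (.brk 0 (.app Nbar (.brk 0 (.app Nbar (.var 0)))))
def M2 : Trm := .mu 0 (.brk 0 (.app Nbar (.brk 0 Nbar)))
def M3 : Trm := .mu 0 (.brk 0 Mbar)

theorem step_mono {S T : Set Rule} (h : S ⊆ T) {M N : Trm} (hs : Step S M N) :
    Step T M N := by
  induction hs with
  | head hr hh => exact Step.head (h hr) hh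
  | lam x _ ih => exact Step.lam x ih
  | appl N _ ih => exact Step.appl N ih
  | appr M _ ih => exact Step.appr M ih
  | brk a _ ih => exact Step.brk a ih
  | mu a _ ih => exact Step.mu a ih

theorem step1 : Step {Rule.mu'} Mbar M1 := by
  refine Step.head rfl ?_
  have h := Head.mu' 0 (.brk 0 (.brk 0 (.var 0))) Nbar
  have e : subLmu 0 Nbar (.brk 0 (.brk 0 (.var 0)))
      = .brk 0 (.app Nbar (.brk 0 (.app Nbar (.var 0)))) := by decide
  rw [e] at h
  exact h

theorem step2 : Step {Rule.mu} M1 M2 := by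
  refine Step.mu 0 (Step.brk 0 (Step.appr Nbar (Step.brk 0 (Step.head rfl ?_))))
  have h := Head.mu 1 Ubar (.var 0)
  have e : subR 1 (.var 0) Ubar = Ubar := by decide
  rw [e] at h
  exact h

theorem step3 : Step {Rule.rho} M2 M3 := by
  refine Step.mu 0 (Step.brk 0 (Step.appr Nbar (Step.head rfl ?_)))
  have h := Head.rho 1 0 Ubar
  have e : renMu 1 0 Ubar = Ubar := by decide
  rw [e] at h
  exact h

theorem step4 : Step {Rule.theta} M3 Mbar := by
  refine Step.head rfl (Head.theta 0 Mbar ?_)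
  decide

theorem sub_all {r : Rule} : ({r} : Set Rule) ⊆ RAll := by
  intro s hs
  cases hs
  cases r <;> simp [RAll]

theorem no_acc : ∀ X : Trm, Acc (fun a b => Step RAll b a) X →
    X ≠ Mbar ∧ X ≠ M1 ∧ X ≠ M2 ∧ X ≠ M3 := by
  intro X hX
  induction hX with
  | intro X _ ih =>
    refine ⟨?_, ?_, ?_, ?_⟩ <;> rintro rfl
    · exact (ih M1 (step_mono sub_all step1)).2.1 rfl
    · exact (ih M2 (step_mono sub_all step2)).2.2.1 rfl
    · exact (ih M3 (step_mono sub_all step3)).2.2.2 rfl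
    · exact (ih Mbar (step_mono sub_all step4)).1 rfl

theorem typing : ∃ Θ : LMu.Ctx,
    Typing (Function.update (fun _ => none) 0 (some Ty.bot)) Mbar Ty.bot Θ := by
  refine ⟨fun _ => none, ?_⟩
  have hx : Typing (Function.update (fun _ => none) 0 (some Ty.bot)) (.var 0) Ty.bot
      (Function.update (Function.update (fun _δ : ℕ => (none : Option Ty)) 1
        (some (Ty.arr Ty.bot Ty.bot))) 0 (some Ty.bot)) := Typing.ax (by simp)
  have hU1 : Typing (Function.update (fun _ => none) 0 (some Ty.bot)) Ubar Ty.bot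
      (Function.update (fun _δ : ℕ => (none : Option Ty)) 1
        (some (Ty.arr Ty.bot Ty.bot))) := by
    refine Typing.mu (Typing.brk (A := Ty.bot) (Typing.brk (A := Ty.bot) (Typing.ax (by simp)) ?_) ?_) <;> simp
  have hU2 : Typing (Function.update (fun _ => none) 0 (some Ty.bot)) Ubar Ty.bot
      (fun _ => none) := by
    refine Typing.mu (Typing.brk (A := Ty.bot) (Typing.brk (A := Ty.bot) (Typing.ax (by simp)) ?_) ?_) <;> simp
  exact Typing.app (Typing.mu hU1) hU2

end LMuAux

open LMu in
theorem not_sn_counterexample :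
    let U : LMu.Trm := .mu 0 (.brk 0 (.brk 0 (.var 0)))
    let M : LMu.Trm := .app (.mu 1 U) U
    (∃ Θ : LMu.Ctx,
      LMu.Typing (Function.update (fun _ => none) 0 (some LMu.Ty.bot)) M LMu.Ty.bot Θ) ∧
    (∃ M₁ M₂ M₃, LMu.Step {LMu.Rule.mu'} M M₁ ∧ LMu.Step {LMu.Rule.mu} M₁ M₂ ∧
      LMu.Step {LMu.Rule.rho} M₂ M₃ ∧ LMu.Step {LMu.Rule.theta} M₃ M) ∧
    ¬ LMu.SN LMu.RAll M := by
  refine ⟨LMuAux.typing, ⟨LMuAux.M1, LMuAux.M2, LMuAux.M3,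
    LMuAux.step1, LMuAux.step2, LMuAux.step3, LMuAux.step4⟩, fun h => ?_⟩
  exact (LMuAux.no_acc LMuAux.Mbar h).1 rfl
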